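/- arXiv:1401.0085 — 3 statements merged into one kernel-verified Lean document; each statement's English description precedes it below -/
import Mathlib

section
/- Let 0 ≤ p ≤ 1/4 and n a positive integer with p·n ≥ 36. Let X be a binomial random variable with parameters n and p. Then for any real number θ, the probability that |X − θ| ≥ (1/2)·√(p·n) is at least 0.01. -/
/-!
Let `Y = (X - θ)²` and `r = √(pn)/2`. By Cauchy–Schwarz, the Paley–Zygmund inequality
`(E Y - r²)² ≤ P(Y ≥ r²) · E Y²` holds. For the binomial distribution, both `E (X - θ)²` and
`E (X - θ)⁴` are explicit polynomials in `n`, `p` and `d = np - θ`, obtained from the factorial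
moments `E [X (X - 1) ⋯ (X - j + 1)] = n (n - 1) ⋯ (n - j + 1) pʲ`. Since `r² = pn/4` is at most a
third of the variance `np(1 - p)`, an elementary inequality gives `E Y² ≤ 100 (E Y - r²)²`,
uniformly in `d`.
-/

open Finset

/-- The probability mass function of the binomial distribution B(n,p). -/
noncomputable def binomPMF (p : ℝ) (n k : ℕ) : ℝ :=
  (n.choose k : ℝ) * p ^ k * (1 - p) ^ (n - k)

theorem Finset.paley_zygmund {ι : Type*} (s : Finset ι) (w f : ι → ℝ) (r : ℝ)
    (hw : ∀ i ∈ s, 0 ≤ w i) (hw_sum : ∑ i ∈ s, w i ≤ 1)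
    (hr : r ^ 2 ≤ ∑ i ∈ s, w i * f i ^ 2) :
    (∑ i ∈ s, w i * f i ^ 2 - r ^ 2) ^ 2 ≤
      (∑ i ∈ s, if r ≤ |f i| then w i else 0) * ∑ i ∈ s, w i * f i ^ 4 := by
  set tail := ∑ i ∈ s, if r ≤ |f i| then w i * f i ^ 2 else 0
  have h_tail : ∑ i ∈ s, w i * f i ^ 2 - r ^ 2 ≤ tail := by
    have h_bulk : ∑ i ∈ s, w i * f i ^ 2 - tail ≤ ∑ i ∈ s, w i * r ^ 2 := by
      rw [← sum_sub_distrib]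
      refine sum_le_sum fun i hi => ?_
      split_ifs with h
      · simpa using mul_nonneg (hw i hi) (sq_nonneg r)
      · have : f i ^ 2 ≤ r ^ 2 := by
          rw [← sq_abs]; exact pow_le_pow_left₀ (abs_nonneg _) (not_le.1 h).le 2
        simpa using mul_le_mul_of_nonneg_left this (hw i hi)
    have : ∑ i ∈ s, w i * r ^ 2 ≤ r ^ 2 := by
      rw [← sum_mul]; exact mul_le_of_le_one_left (sq_nonneg r) hw_sum
    linarith
  have h_cs : tail ^ 2 ≤ (∑ i ∈ s, if r ≤ |f i| then w i else 0) * ∑ i ∈ s, w i * f i ^ 4 := by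
    refine sum_sq_le_sum_mul_sum_of_sq_le_mul s (fun i hi => ?_)
      (fun i hi => mul_nonneg (hw i hi) (by positivity)) (fun i _ => ?_)
    · split_ifs
      exacts [hw i hi, le_rfl]
    · split_ifs
      · exact le_of_eq (by ring)
      · simp
  exact (pow_le_pow_left₀ (sub_nonneg.2 hr) h_tail 2).trans h_cs

theorem sum_binomPMF (p : ℝ) (n : ℕ) : ∑ k ∈ range (n + 1), binomPMF p n k = 1 := by
  have h := add_pow p (1 - p) n
  rw [add_sub_cancel, one_pow] at h
  rw [h]
  exact sum_congr rfl fun k _ => by unfold binomPMF; ring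

theorem sum_choose_mul_binomPMF (p : ℝ) (n j : ℕ) :
    ∑ k ∈ range (n + 1), (k.choose j : ℝ) * binomPMF p n k = n.choose j * p ^ j := by
  have h_low : ∀ k < j, (k.choose j : ℝ) * binomPMF p n k = 0 := fun k hk => by
    rw [Nat.choose_eq_zero_of_lt hk, Nat.cast_zero, zero_mul]
  rcases lt_or_ge n j with hnj | hjn
  · rw [Nat.choose_eq_zero_of_lt hnj, Nat.cast_zero, zero_mul]
    exact sum_eq_zero fun k hk => h_low k (by grind)
  rw [show n + 1 = j + (n - j + 1) by omega, sum_range_add,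
    sum_eq_zero fun k hk => h_low k (mem_range.1 hk), zero_add,
    ← mul_one ((n.choose j : ℝ) * p ^ j), ← sum_binomPMF p (n - j), mul_sum]
  refine sum_congr rfl fun m hm => ?_
  have hmn : j + m ≤ n := by rw [mem_range] at hm; omega
  have h_choose : (n.choose (j + m) : ℝ) * (j + m).choose j = n.choose j * (n - j).choose m := by
    exact_mod_cast (Nat.choose_mul (n := n) (Nat.le_add_right j m)).trans (by simp)
  unfold binomPMF
  rw [show n - (j + m) = n - j - m by omega, pow_add]
  linear_combination (p ^ j * p ^ m * (1 - p) ^ (n - j - m)) * h_choose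

theorem sum_binomPMF_mul_descPochhammer_eval (p : ℝ) (n j : ℕ) :
    ∑ k ∈ range (n + 1), binomPMF p n k * (descPochhammer ℝ j).eval (k : ℝ) =
      (descPochhammer ℝ j).eval (n : ℝ) * p ^ j := by
  simp only [descPochhammer_eval_eq_descFactorial, Nat.descFactorial_eq_factorial_mul_choose,
    Nat.cast_mul, mul_assoc, ← sum_choose_mul_binomPMF, mul_sum]
  exact sum_congr rfl fun k _ => by ring

theorem sum_binomPMF_mul_sub_sq (p θ : ℝ) (n : ℕ) :
    ∑ k ∈ range (n + 1), binomPMF p n k * ((k : ℝ) - θ) ^ 2 =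
      n * p * (1 - p) + (n * p - θ) ^ 2 := by
  let D (j k : ℕ) : ℝ := binomPMF p n k * (descPochhammer ℝ j).eval (k : ℝ)
  calc ∑ k ∈ range (n + 1), binomPMF p n k * ((k : ℝ) - θ) ^ 2
      = ∑ k ∈ range (n + 1), (D 2 k + (1 - 2 * θ) * D 1 k + θ ^ 2 * D 0 k) :=
        sum_congr rfl fun k _ => by
          simp only [D, descPochhammer_succ_eval, descPochhammer_zero, Polynomial.eval_one]; ring
    _ = _ := by
        simp only [D, sum_add_distrib, ← mul_sum, sum_binomPMF_mul_descPochhammer_eval]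
        simp only [descPochhammer_succ_eval, descPochhammer_zero, Polynomial.eval_one]; ring

theorem sum_binomPMF_mul_sub_pow_four (p θ : ℝ) (n : ℕ) :
    ∑ k ∈ range (n + 1), binomPMF p n k * ((k : ℝ) - θ) ^ 4 =
      n * p * (1 - p) * (1 + 3 * (n - 2) * p * (1 - p))
        + 4 * (n * p - θ) * (n * p * (1 - p) * (1 - 2 * p))
        + 6 * (n * p - θ) ^ 2 * (n * p * (1 - p)) + (n * p - θ) ^ 4 := by
  let D (j k : ℕ) : ℝ := binomPMF p n k * (descPochhammer ℝ j).eval (k : ℝ)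
  -- `x⁴ = x⁽⁴⁾ + 6 x⁽³⁾ + 7 x⁽²⁾ + x⁽¹⁾` (Stirling numbers of the second kind), shifted by `θ`
  calc ∑ k ∈ range (n + 1), binomPMF p n k * ((k : ℝ) - θ) ^ 4
      = ∑ k ∈ range (n + 1), (D 4 k + (6 - 4 * θ) * D 3 k + (7 - 12 * θ + 6 * θ ^ 2) * D 2 k
          + (1 - 4 * θ + 6 * θ ^ 2 - 4 * θ ^ 3) * D 1 k + θ ^ 4 * D 0 k) :=
        sum_congr rfl fun k _ => by
          simp only [D, descPochhammer_succ_eval, descPochhammer_zero, Polynomial.eval_one]; ring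
    _ = _ := by
        simp only [D, sum_add_distrib, ← mul_sum, sum_binomPMF_mul_descPochhammer_eval]
        simp only [descPochhammer_succ_eval, descPochhammer_zero, Polynomial.eval_one]; ring

theorem binomPMF_nonneg {p : ℝ} (hp0 : 0 ≤ p) (hp1 : p ≤ 1) (n k : ℕ) : 0 ≤ binomPMF p n k := by
  unfold binomPMF
  have : 0 ≤ 1 - p := by linarith
  positivity

theorem binomial_fourth_moment_le {p : ℝ} {n : ℕ} (hp0 : 0 ≤ p) (hp : p ≤ 1 / 4)
    (hpn : 36 ≤ p * n) (θ : ℝ) :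
    n * p * (1 - p) * (1 + 3 * (n - 2) * p * (1 - p))
        + 4 * (n * p - θ) * (n * p * (1 - p) * (1 - 2 * p))
        + 6 * (n * p - θ) ^ 2 * (n * p * (1 - p)) + (n * p - θ) ^ 4 ≤
      100 * (n * p * (1 - p) + (n * p - θ) ^ 2 - p * n / 4) ^ 2 := by
  set σ2 := n * p * (1 - p)
  set d := n * p - θ
  have hσ : 27 ≤ σ2 := by nlinarith
  have hσp : 0 ≤ σ2 * p := by positivity
  have hσq : 0 ≤ σ2 * (1 - p) := by nlinarith
  have h_kurtosis : σ2 * (1 + 3 * (n - 2) * p * (1 - p)) ≤ σ2 + 3 * σ2 ^ 2 := by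
    nlinarith [mul_nonneg (Nat.cast_nonneg n) (sq_nonneg (p * (1 - p)))]
  have h_rhs : (2 * σ2 / 3 + d ^ 2) ^ 2 ≤ (σ2 + d ^ 2 - p * n / 4) ^ 2 :=
    pow_le_pow_left₀ (by positivity) (by nlinarith) 2
  nlinarith [mul_nonneg (sq_nonneg (d - 1)) hσq, mul_nonneg (sq_nonneg (d + 1)) hσp,
    mul_nonneg (by linarith : (0:ℝ) ≤ σ2) (sq_nonneg d)]

theorem binomial_anticoncentration_general (p : ℝ) (n : ℕ) (hp0 : 0 ≤ p) (hp : p ≤ 1 / 4)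
    (hpn : 36 ≤ p * n) (θ : ℝ) :
    0.01 ≤ ∑ k ∈ Finset.range (n + 1),
      if (1 / 2) * Real.sqrt (p * n) ≤ |(k : ℝ) - θ| then binomPMF p n k else 0 := by
  set r := 1 / 2 * Real.sqrt (p * n)
  set mass := ∑ k ∈ range (n + 1), if r ≤ |(k : ℝ) - θ| then binomPMF p n k else 0
  have hr : r ^ 2 = p * n / 4 := by
    rw [mul_pow, Real.sq_sqrt (by linarith)]; ring
  have hw : ∀ k ∈ range (n + 1), 0 ≤ binomPMF p n k :=
    fun k _ => binomPMF_nonneg hp0 (by linarith) n k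
  have h_gap : p * n / 4 < n * p * (1 - p) + (n * p - θ) ^ 2 := by
    nlinarith [sq_nonneg (n * p - θ)]
  have h_pz := paley_zygmund (range (n + 1)) (binomPMF p n) (fun k => (k : ℝ) - θ) r hw
    (sum_binomPMF p n).le (by rw [sum_binomPMF_mul_sub_sq, hr]; exact h_gap.le)
  rw [sum_binomPMF_mul_sub_sq, sum_binomPMF_mul_sub_pow_four, hr] at h_pz
  have h_mass : 0 ≤ mass := sum_nonneg fun k hk => by split_ifs; exacts [hw k hk, le_rfl]
  have h_main := h_pz.trans
    (mul_le_mul_of_nonneg_left (binomial_fourth_moment_le hp0 hp hpn θ) h_mass)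
  nlinarith [pow_pos (sub_pos.2 h_gap) 2]

/-- Anti-concentration for the binomial: if `0 ≤ p ≤ 1/4` and `p·n ≥ 36`, then for any
center `θ`, the probability that `|X - θ| ≥ (1/2)·√(p·n)` is at least `0.01`. -/
theorem binomial_anticoncentration (p : ℝ) (n : ℕ) (hp0 : 0 ≤ p) (hp : p ≤ 1 / 4)
    (hn : 0 < n) (hpn : 36 ≤ p * n) (θ : ℝ) :
    0.01 ≤ ∑ k ∈ Finset.range (n + 1),
      if (1 / 2) * Real.sqrt (p * n) ≤ |(k : ℝ) - θ| then binomPMF p n k else 0 :=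
  binomial_anticoncentration_general p n hp0 hp hpn θ
end

section
/- Rayleigh's Monotonicity Principle: if H is a subgraph of a weighted graph G (obtained by deleting edges or decreasing edge weights), then for any two vertices s, t connected in H, the effective resistance satisfies R_G(s,t) ≤ R_H(s,t). -/
open Finset

/-!
For symmetric weights `w`, summation by parts turns `L_w u = e_s - e_t` into
`E_w(u, v) = 2 (v s - v t)` for every `v`, where `E_w` is the Dirichlet form. So with
`R_G = uG s - uG t` and `R_H = uH s - uH t` we get `E_H(uH, uH) = 2 R_H`, `E_H(uH, uG) = 2 R_G`
and `E_H(uG, uG) ≤ E_G(uG, uG) = 2 R_G`, and expanding `0 ≤ E_H(uH - uG, uH - uG)` gives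
`0 ≤ 2 R_H - 2 R_G`.
-/

section DirichletForm

variable {V : Type*} [Fintype V]

def dirichletForm (w : V → V → ℝ) (u v : V → ℝ) : ℝ :=
  ∑ x, ∑ y, w x y * (u x - u y) * (v x - v y)

lemma dirichletForm_self_nonneg {w : V → V → ℝ} (hw : ∀ x y, 0 ≤ w x y) (u : V → ℝ) :
    0 ≤ dirichletForm w u u :=
  sum_nonneg fun x _ => sum_nonneg fun y _ => by
    rw [mul_assoc]; exact mul_nonneg (hw x y) (mul_self_nonneg _)

lemma dirichletForm_self_mono {w w' : V → V → ℝ} (hle : ∀ x y, w x y ≤ w' x y) (u : V → ℝ) :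
    dirichletForm w u u ≤ dirichletForm w' u u :=
  sum_le_sum fun x _ => sum_le_sum fun y _ => by
    simp only [mul_assoc]; exact mul_le_mul_of_nonneg_right (hle x y) (mul_self_nonneg _)

lemma dirichletForm_sub_self (w : V → V → ℝ) (u v : V → ℝ) :
    dirichletForm w (u - v) (u - v)
      = dirichletForm w u u - 2 * dirichletForm w u v + dirichletForm w v v := by
  simp only [dirichletForm, mul_sum, ← sum_sub_distrib, ← sum_add_distrib]
  refine sum_congr rfl fun x _ => sum_congr rfl fun y _ => ?_
  simp only [Pi.sub_apply]
  ring

lemma dirichletForm_eq_two_mul_sum_laplacian {w : V → V → ℝ} (hw : ∀ x y, w x y = w y x)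
    (u v : V → ℝ) :
    dirichletForm w u v = 2 * ∑ x, (∑ y, w x y * (u x - u y)) * v x := by
  have swap : ∑ x, ∑ y, w x y * (u x - u y) * v y = -∑ x, ∑ y, w x y * (u x - u y) * v x := by
    rw [sum_comm, ← sum_neg_distrib]
    refine sum_congr rfl fun y _ => ?_
    rw [← sum_neg_distrib]
    exact sum_congr rfl fun x _ => by rw [hw]; ring
  calc dirichletForm w u v
      = ∑ x, ∑ y, w x y * (u x - u y) * v x - ∑ x, ∑ y, w x y * (u x - u y) * v y := by
        simp only [dirichletForm, ← sum_sub_distrib, mul_sub]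
    _ = 2 * ∑ x, (∑ y, w x y * (u x - u y)) * v x := by
        simp only [swap, sum_mul]; ring

lemma dirichletForm_eq_of_laplacian_eq [DecidableEq V] {w : V → V → ℝ}
    (hw : ∀ x y, w x y = w y x) {s t : V} {u : V → ℝ}
    (hu : ∀ x, ∑ y, w x y * (u x - u y)
        = (if x = s then (1 : ℝ) else 0) - (if x = t then (1 : ℝ) else 0))
    (v : V → ℝ) :
    dirichletForm w u v = 2 * (v s - v t) := by
  simp [dirichletForm_eq_two_mul_sum_laplacian hw, hu, sub_mul, sum_sub_distrib]

end DirichletForm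

/-- Effective resistances are encoded via potentials solving the Laplacian equation
`L u = e_s - e_t`, for which `R(s,t) = u(s) - u(t)`. -/
theorem rayleigh_monotonicity_general {V : Type*} [Fintype V] [DecidableEq V]
    (wG wH : V → V → ℝ)
    (hGsym : ∀ x y, wG x y = wG y x) (hHsym : ∀ x y, wH x y = wH y x)
    (hHnn : ∀ x y, 0 ≤ wH x y) (hle : ∀ x y, wH x y ≤ wG x y)
    (s t : V)
    (uG uH : V → ℝ)
    (huG : ∀ x, ∑ y, wG x y * (uG x - uG y)
        = (if x = s then (1 : ℝ) else 0) - (if x = t then (1 : ℝ) else 0))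
    (huH : ∀ x, ∑ y, wH x y * (uH x - uH y)
        = (if x = s then (1 : ℝ) else 0) - (if x = t then (1 : ℝ) else 0)) :
    uG s - uG t ≤ uH s - uH t := by
  have hHH := dirichletForm_eq_of_laplacian_eq hHsym huH uH
  have hHG := dirichletForm_eq_of_laplacian_eq hHsym huH uG
  have hGG := dirichletForm_eq_of_laplacian_eq hGsym huG uG
  have hmono := dirichletForm_self_mono hle uG
  have hnn := dirichletForm_self_nonneg hHnn (uH - uG)
  rw [dirichletForm_sub_self] at hnn
  linarith

/-- Rayleigh's Monotonicity Principle: if `H` is obtained from a weighted graph `G` by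
deleting edges or decreasing edge weights (`w_H ≤ w_G` pointwise), then for vertices `s, t`
connected in `H`, the effective resistances satisfy `R_G(s,t) ≤ R_H(s,t)`.  Effective
resistances are encoded via potentials solving the Laplacian equation `L u = e_s - e_t`,
for which `R(s,t) = u(s) - u(t)`. -/
theorem rayleigh_monotonicity {V : Type*} [Fintype V] [DecidableEq V]
    (wG wH : V → V → ℝ)
    (hGsym : ∀ x y, wG x y = wG y x) (hHsym : ∀ x y, wH x y = wH y x)
    (hHnn : ∀ x y, 0 ≤ wH x y) (hle : ∀ x y, wH x y ≤ wG x y)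
    (s t : V) (hst : s ≠ t)
    (hconn : (SimpleGraph.fromRel (fun x y => 0 < wH x y)).Reachable s t)
    (uG uH : V → ℝ)
    (huG : ∀ x, ∑ y, wG x y * (uG x - uG y)
        = (if x = s then (1 : ℝ) else 0) - (if x = t then (1 : ℝ) else 0))
    (huH : ∀ x, ∑ y, wH x y * (uH x - uH y)
        = (if x = s then (1 : ℝ) else 0) - (if x = t then (1 : ℝ) else 0)) :
    uG s - uG t ≤ uH s - uH t :=
  rayleigh_monotonicity_general wG wH hGsym hHsym hHnn hle s t uG uH huG huH
end

section
/- Let G be a graph, let OPT_G = min_{U ⊆ V, 0<|U|<n/2} Cut_G(U)/|U| be the sparsest-cut value of G, and let G̃ satisfy: (a) (1−ε)·Cut_G(U) ≤ Cut_{G̃}(U) for all U, and (b) Cut_{G̃}(U_G) ≤ (1+ε)·Cut_G(U_G) + δ·|U_G| for an optimal set U_G of G, with ε = 1/2. Suppose Ū achieves Cut_{G̃}(Ū)/|Ū| ≤ α·OPT_{G̃} with |Ū| < n/2, and let OPT′ = Cut_{G̃}(Ū)/|Ū|. If δ ≤ OPT′/(2α), then Cut_G(Ū)/|Ū| ≤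 6α·OPT_G. -/
section OrderedField

variable {K : Type*} [Field K] [LinearOrder K] [IsStrictOrderedRing K]

theorem div_le_mul_div_add_of_le_mul_add {a b c k δ : K} (hc : 0 < c)
    (h : a ≤ k * b + δ * c) : a / c ≤ k * (b / c) + δ := by
  rw [div_le_iff₀ hc]
  calc a ≤ k * b + δ * c := h
    _ = (k * (b / c) + δ) * c := by field_simp

-- The additive error `δ` is absorbed into `x` itself: `α * δ ≤ x / 2`.
theorem le_two_mul_mul_of_le_mul_add_of_le_div {x y α δ : K} (hα : 0 < α)
    (h : x ≤ α * (y + δ)) (hδ : δ ≤ x / (2 * α)) : x ≤ 2 * α * y := by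
  have hαδ : α * δ ≤ x / 2 := by
    calc α * δ ≤ α * (x / (2 * α)) := mul_le_mul_of_nonneg_left hδ hα.le
      _ = x / 2 := by field_simp
  linarith

theorem div_le_two_mul_div_of_half_mul_le {a b c : K} (h : 1 / 2 * a ≤ b) (hc : 0 ≤ c) :
    a / c ≤ 2 * (b / c) := by
  rw [← mul_div_assoc]
  exact div_le_div_of_nonneg_right (by linarith) hc

end OrderedField

theorem sparsest_cut_reduction_general {V : Type*} [Fintype V]
    (cutG cutGt : Finset V → ℝ) (OPTG OPTGt OPT' α δ : ℝ) (UG Ub : Finset V)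
    (hα : 0 < α)
    (hUG1 : 0 < UG.card) (hUG2 : (UG.card : ℝ) < (Fintype.card V : ℝ) / 2)
    (hOPTGdef : OPTG = cutG UG / (UG.card : ℝ))
    (ha : ∀ U : Finset V, (1 / 2) * cutG U ≤ cutGt U)
    (hb : cutGt UG ≤ (3 / 2) * cutG UG + δ * (UG.card : ℝ))
    (hOPT' : OPT' = cutGt Ub / (Ub.card : ℝ))
    (happrox : OPT' ≤ α * OPTGt)
    (hOPTGtmin : ∀ U : Finset V, 0 < U.card → (U.card : ℝ) < (Fintype.card V : ℝ) / 2 →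
      OPTGt ≤ cutGt U / (U.card : ℝ))
    (hδ : δ ≤ OPT' / (2 * α)) :
    cutG Ub / (Ub.card : ℝ) ≤ 6 * α * OPTG := by
  have hUG : (0 : ℝ) < UG.card := by exact_mod_cast hUG1
  have hOPTGt : OPTGt ≤ 3 / 2 * OPTG + δ := by
    rw [hOPTGdef]
    exact (hOPTGtmin UG hUG1 hUG2).trans (div_le_mul_div_add_of_le_mul_add hUG hb)
  have hOPT'_le : OPT' ≤ 2 * α * (3 / 2 * OPTG) :=
    le_two_mul_mul_of_le_mul_add_of_le_div hα
      (happrox.trans (mul_le_mul_of_nonneg_left hOPTGt hα.le)) hδ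
  calc cutG Ub / (Ub.card : ℝ) ≤ 2 * OPT' := by
        rw [hOPT']
        exact div_le_two_mul_div_of_half_mul_le (ha Ub) (Nat.cast_nonneg _)
    _ ≤ 6 * α * OPTG := by linarith

/-- Reduction of the sparsest cut problem to a probabilistic sparsifier (with `ε = 1/2`).
If `G̃` satisfies the one-sided cut bounds (a) and (b), `Ū` is an `α`-approximate sparsest
cut of `G̃` with value `OPT' = Cut_{G̃}(Ū)/|Ū|`, and `δ ≤ OPT'/(2α)`, then `Ū` is a
`6α`-approximate sparsest cut of `G`. -/
theorem sparsest_cut_reduction {V : Type*} [Fintype V]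
    (cutG cutGt : Finset V → ℝ) (OPTG OPTGt OPT' α δ : ℝ) (UG Ub : Finset V)
    (hα : 0 < α)
    (hUG1 : 0 < UG.card) (hUG2 : (UG.card : ℝ) < (Fintype.card V : ℝ) / 2)
    (hOPTGdef : OPTG = cutG UG / (UG.card : ℝ))
    (hOPTGmin : ∀ U : Finset V, 0 < U.card → (U.card : ℝ) < (Fintype.card V : ℝ) / 2 →
      OPTG ≤ cutG U / (U.card : ℝ))
    (ha : ∀ U : Finset V, (1 / 2) * cutG U ≤ cutGt U)
    (hb : cutGt UG ≤ (3 / 2) * cutG UG + δ * (UG.card : ℝ))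
    (hUb1 : 0 < Ub.card) (hUb2 : (Ub.card : ℝ) < (Fintype.card V : ℝ) / 2)
    (hOPT' : OPT' = cutGt Ub / (Ub.card : ℝ))
    (happrox : OPT' ≤ α * OPTGt)
    (hOPTGtmin : ∀ U : Finset V, 0 < U.card → (U.card : ℝ) < (Fintype.card V : ℝ) / 2 →
      OPTGt ≤ cutGt U / (U.card : ℝ))
    (hδ : δ ≤ OPT' / (2 * α)) :
    cutG Ub / (Ub.card : ℝ) ≤ 6 * α * OPTG :=
  sparsest_cut_reduction_general cutG cutGt OPTG OPTGt OPT' α δ UG Ub hα hUG1 hUG2 hOPTGdef ha hb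
    hOPT' happrox hOPTGtmin hδ
end
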